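/- arXiv:2507.16461 — 7 statements merged into one kernel-verified Lean document; each statement's English description precedes it below -/
import Mathlib

section
/- For any real m×n matrix A and any μ > 0, ‖(A Aᵀ + μ I)⁻¹ A‖ ≤ 1/(2√μ). -/
/-! If `z = (A A† + μ)⁻¹ A y`, pairing `A A† z + μ z = A y` with `z` gives
`‖A† z‖² + μ ‖z‖² = ⟪y, A† z⟫ ≤ ‖y‖ ‖A† z‖`, and since `‖y‖ t - t² ≤ ‖y‖² / 4` for every real `t`,
`μ ‖z‖² ≤ ‖y‖² / 4`. -/

open ContinuousLinearMap

variable {E F : Type*} [NormedAddCommGroup E] [InnerProductSpace ℝ E] [CompleteSpace E]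
  [NormedAddCommGroup F] [InnerProductSpace ℝ F] [CompleteSpace F]

theorem sq_norm_adjoint_add_mul_sq_norm_le (A : F →L[ℝ] E) (μ : ℝ) {y : F} {z : E}
    (h : A (adjoint A z) + μ • z = A y) :
    ‖adjoint A z‖ ^ 2 + μ * ‖z‖ ^ 2 ≤ ‖y‖ * ‖adjoint A z‖ := by
  have hinner : ‖adjoint A z‖ ^ 2 + μ * ‖z‖ ^ 2 = inner ℝ y (adjoint A z) := by
    rw [adjoint_inner_right, ← h, inner_add_left, ← adjoint_inner_right, real_inner_smul_left,
      real_inner_self_eq_norm_sq, real_inner_self_eq_norm_sq]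
  exact hinner ▸ real_inner_le_norm _ _

theorem two_mul_sqrt_mul_norm_le_of_apply_adjoint_add_smul_eq (A : F →L[ℝ] E) {μ : ℝ}
    (hμ : 0 < μ) {y : F} {z : E} (h : A (adjoint A z) + μ • z = A y) :
    2 * √μ * ‖z‖ ≤ ‖y‖ := by
  have hpair := sq_norm_adjoint_add_mul_sq_norm_le A μ h
  have hsq : (2 * √μ * ‖z‖) ^ 2 ≤ ‖y‖ ^ 2 := by
    rw [mul_pow, mul_pow, Real.sq_sqrt hμ.le]
    nlinarith [sq_nonneg (‖y‖ - 2 * ‖adjoint A z‖)]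
  exact (pow_le_pow_iff_left₀ (by positivity) (norm_nonneg y) two_ne_zero).mp hsq

theorem inv_comp_norm_le_general (m n : ℕ)
    (A : EuclideanSpace ℝ (Fin n) →L[ℝ] EuclideanSpace ℝ (Fin m))
    (μ : ℝ) (hμ : 0 < μ)
    (B : EuclideanSpace ℝ (Fin m) →L[ℝ] EuclideanSpace ℝ (Fin m))
    (hB₁ : (A.comp (ContinuousLinearMap.adjoint A) + μ • ContinuousLinearMap.id ℝ _).comp B =
      ContinuousLinearMap.id ℝ _) :
    ‖B.comp A‖ ≤ 1 / (2 * Real.sqrt μ) := by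
  refine opNorm_le_bound _ (by positivity) fun y => ?_
  have hsolve : A (adjoint A (B (A y))) + μ • B (A y) = A y := by
    simpa using congr($hB₁ (A y))
  have hbound := two_mul_sqrt_mul_norm_le_of_apply_adjoint_add_smul_eq A hμ hsolve
  rw [comp_apply, one_div_mul_eq_div, le_div_iff₀ (by positivity)]
  linarith

/-- For any real m×n matrix `A` (as a continuous linear map between Euclidean
spaces) and `μ > 0`, `‖(A Aᵀ + μ I)⁻¹ A‖ ≤ 1/(2√μ)`, where the inverse is
expressed via any two-sided inverse `B` of `A Aᵀ + μ I`. -/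
theorem inv_comp_norm_le (m n : ℕ)
    (A : EuclideanSpace ℝ (Fin n) →L[ℝ] EuclideanSpace ℝ (Fin m))
    (μ : ℝ) (hμ : 0 < μ)
    (B : EuclideanSpace ℝ (Fin m) →L[ℝ] EuclideanSpace ℝ (Fin m))
    (hB₁ : (A.comp (ContinuousLinearMap.adjoint A) + μ • ContinuousLinearMap.id ℝ _).comp B =
      ContinuousLinearMap.id ℝ _)
    (hB₂ : B.comp (A.comp (ContinuousLinearMap.adjoint A) + μ • ContinuousLinearMap.id ℝ _) =
      ContinuousLinearMap.id ℝ _) :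
    ‖B.comp A‖ ≤ 1 / (2 * Real.sqrt μ) :=
  inv_comp_norm_le_general m n A μ hμ B hB₁
end

section
/- Let H = A Aᵀ + μ I with A an m×n real matrix and μ > 0, and let g, d, r ∈ ℝ^m satisfy r = H d + g and ‖r‖ ≤ τ μ ‖d‖ for some τ ∈ (0, 1). Then ‖d‖ ≤ (1/(1-τ)) ‖H⁻¹ g‖. -/
/-!
Since `⟪H y, y⟫ = ‖Aᵀ y‖² + μ ‖y‖² ≥ μ ‖y‖²`, the operator `H` is bounded below by `μ`.
The error `d + H⁻¹ g` is mapped by `H` to the residual `r`, so its norm is at most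
`‖r‖ / μ ≤ τ ‖d‖`, and the triangle inequality gives `(1 - τ) ‖d‖ ≤ ‖H⁻¹ g‖`.
-/

open ContinuousLinearMap
open scoped InnerProductSpace

theorem mul_norm_le_norm_apply_of_mul_sq_le_inner {E : Type*} [NormedAddCommGroup E]
    [InnerProductSpace ℝ E] {T : E →L[ℝ] E} {μ : ℝ} (hT : ∀ y, μ * ‖y‖ ^ 2 ≤ ⟪T y, y⟫_ℝ)
    (y : E) : μ * ‖y‖ ≤ ‖T y‖ := by
  rcases eq_or_ne y 0 with rfl | hy
  · simp
  have hy_pos : 0 < ‖y‖ := norm_pos_iff.mpr hy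
  have : μ * ‖y‖ * ‖y‖ ≤ ‖T y‖ * ‖y‖ := by
    rw [mul_assoc, ← sq]
    exact (hT y).trans (real_inner_le_norm _ _)
  exact le_of_mul_le_mul_right this hy_pos

theorem inner_comp_adjoint_add_smul_id_apply_self {E F : Type*} [NormedAddCommGroup E]
    [InnerProductSpace ℝ E] [CompleteSpace E] [NormedAddCommGroup F] [InnerProductSpace ℝ F]
    [CompleteSpace F] (A : E →L[ℝ] F) (μ : ℝ) (y : F) :
    ⟪(A ∘L adjoint A + μ • ContinuousLinearMap.id ℝ F) y, y⟫_ℝ =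
      ‖adjoint A y‖ ^ 2 + μ * ‖y‖ ^ 2 := by
  rw [add_apply, comp_apply, smul_apply, id_apply, inner_add_left, real_inner_smul_left,
    ← adjoint_inner_right, real_inner_self_eq_norm_sq, real_inner_self_eq_norm_sq]

theorem mul_norm_le_norm_comp_adjoint_add_smul_id_apply {E F : Type*} [NormedAddCommGroup E]
    [InnerProductSpace ℝ E] [CompleteSpace E] [NormedAddCommGroup F] [InnerProductSpace ℝ F]
    [CompleteSpace F] (A : E →L[ℝ] F) (μ : ℝ) (y : F) :
    μ * ‖y‖ ≤ ‖(A ∘L adjoint A + μ • ContinuousLinearMap.id ℝ F) y‖ :=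
  mul_norm_le_norm_apply_of_mul_sq_le_inner (fun y => by
    rw [inner_comp_adjoint_add_smul_id_apply_self]
    exact le_add_of_nonneg_left (sq_nonneg _)) y

theorem norm_le_one_div_one_sub_mul_of_residual_le {E F : Type*} [SeminormedAddCommGroup E]
    [SeminormedAddCommGroup F] {H : E →+ F} {B : F → E} {μ τ : ℝ} (hμ : 0 < μ) (hτ : τ < 1)
    (hH : ∀ y, μ * ‖y‖ ≤ ‖H y‖) (g : F) (hHB : H (B g) = g) {d : E}
    (hres : ‖H d + g‖ ≤ τ * μ * ‖d‖) :
    ‖d‖ ≤ 1 / (1 - τ) * ‖B g‖ := by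
  have herr : ‖d + B g‖ ≤ τ * ‖d‖ := by
    refine le_of_mul_le_mul_left ?_ hμ
    calc μ * ‖d + B g‖ ≤ ‖H (d + B g)‖ := hH _
      _ = ‖H d + g‖ := by rw [map_add, hHB]
      _ ≤ μ * (τ * ‖d‖) := by linarith
  have htri : ‖d‖ ≤ ‖d + B g‖ + ‖B g‖ := by
    simpa using norm_sub_le (d + B g) (B g)
  rw [div_mul_eq_mul_div, one_mul, le_div_iff₀ (sub_pos.mpr hτ)]
  linarith

theorem inexact_direction_bound_general (m n : ℕ)
    (A : EuclideanSpace ℝ (Fin n) →L[ℝ] EuclideanSpace ℝ (Fin m))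
    (μ τ : ℝ) (hμ : 0 < μ) (hτ : τ ∈ Set.Ioo (0 : ℝ) 1)
    (H B : EuclideanSpace ℝ (Fin m) →L[ℝ] EuclideanSpace ℝ (Fin m))
    (hH : H = A.comp (ContinuousLinearMap.adjoint A) + μ • ContinuousLinearMap.id ℝ _)
    (hB₁ : H.comp B = ContinuousLinearMap.id ℝ _)
    (g d r : EuclideanSpace ℝ (Fin m))
    (hr : r = H d + g) (hres : ‖r‖ ≤ τ * μ * ‖d‖) :
    ‖d‖ ≤ (1 / (1 - τ)) * ‖B g‖ := by
  have hHB : H (B g) = g := by rw [← comp_apply, hB₁, id_apply]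
  have hlower : ∀ y, μ * ‖y‖ ≤ ‖H y‖ := by
    subst hH
    exact mul_norm_le_norm_comp_adjoint_add_smul_id_apply A μ
  exact norm_le_one_div_one_sub_mul_of_residual_le (H := H.toLinearMap.toAddMonoidHom) hμ hτ.2
    hlower g hHB (hr ▸ hres)

/-- Inexact solve bound: if `H = A Aᵀ + μ I`, `B` is the inverse of `H`,
`r = H d + g` and `‖r‖ ≤ τ μ ‖d‖` with `τ ∈ (0,1)`, then
`‖d‖ ≤ (1/(1-τ)) ‖H⁻¹ g‖`. -/
theorem inexact_direction_bound (m n : ℕ)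
    (A : EuclideanSpace ℝ (Fin n) →L[ℝ] EuclideanSpace ℝ (Fin m))
    (μ τ : ℝ) (hμ : 0 < μ) (hτ : τ ∈ Set.Ioo (0 : ℝ) 1)
    (H B : EuclideanSpace ℝ (Fin m) →L[ℝ] EuclideanSpace ℝ (Fin m))
    (hH : H = A.comp (ContinuousLinearMap.adjoint A) + μ • ContinuousLinearMap.id ℝ _)
    (hB₁ : H.comp B = ContinuousLinearMap.id ℝ _)
    (hB₂ : B.comp H = ContinuousLinearMap.id ℝ _)
    (g d r : EuclideanSpace ℝ (Fin m))
    (hr : r = H d + g) (hres : ‖r‖ ≤ τ * μ * ‖d‖) :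
    ‖d‖ ≤ (1 / (1 - τ)) * ‖B g‖ :=
  inexact_direction_bound_general m n A μ τ hμ hτ H B hH hB₁ g d r hr hres
end

section
/- Let (a_k) be nonnegative reals with a_{k+1} ≤ c₂ a_k^{δ₂} for all k, where c₂ > 0, δ₂ > 1, and a₀ ≤ r̄ ≤ (1/2) c₂^{−1/(δ₂−1)}, and let (d_k) satisfy ‖d_k‖ ≤ c₁ a_k^{δ₁} with c₁ > 0, δ₁ ∈ (0,1]. Then Σ_{k=0}^∞ ‖d_k‖ ≤ c₁ (2 r̄)^{δ₁} σ < ∞, where σ = Σ_{i=0}^∞ (1/2)^{δ₁ δ₂^i}. In particular, the partial sums x_{k} = x₀ + Σ_{i<k} d_i form a Cauchy sequence. -/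
/-- Summability of the steps under superlinear contraction of the distances:
if `a_{k+1} ≤ c₂ a_k^{δ₂}`, `a₀ ≤ r̄ ≤ (1/2) c₂^{−1/(δ₂−1)}`, and
`‖d_k‖ ≤ c₁ a_k^{δ₁}`, then `Σ ‖d_k‖ ≤ c₁ (2 r̄)^{δ₁} σ < ∞`, where
`σ = Σ_{i=0}^∞ (1/2)^{δ₁ δ₂^i}` (the sum extended to include `i = 0`);
in particular the partial sums `x_k = x₀ + Σ_{i<k} d_i` are Cauchy. -/
theorem steps_summable (m : ℕ) (c₁ c₂ δ₁ δ₂ rbar : ℝ)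
    (a : ℕ → ℝ) (d : ℕ → EuclideanSpace ℝ (Fin m)) (x₀ : EuclideanSpace ℝ (Fin m))
    (hc₁ : 0 < c₁) (hc₂ : 0 < c₂) (hδ₁ : δ₁ ∈ Set.Ioc (0 : ℝ) 1) (hδ₂ : 1 < δ₂)
    (hrbar : 0 < rbar)
    (hpos : ∀ k, 0 ≤ a k)
    (hrec : ∀ k, a (k + 1) ≤ c₂ * a k ^ δ₂)
    (ha₀ : a 0 ≤ rbar)
    (hr : rbar ≤ (1 / 2) * c₂ ^ (-(1 / (δ₂ - 1))))
    (hd : ∀ k, ‖d k‖ ≤ c₁ * a k ^ δ₁) :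
    Summable (fun k : ℕ => ‖d k‖) ∧
      (∑' k : ℕ, ‖d k‖) ≤ c₁ * (2 * rbar) ^ δ₁ * (∑' i : ℕ, ((1 : ℝ) / 2) ^ (δ₁ * δ₂ ^ (i : ℝ))) ∧
      CauchySeq (fun k : ℕ => x₀ + ∑ i ∈ Finset.range k, d i) := by
  obtain ⟨hδ₁0, hδ₁1⟩ := hδ₁
  have hδ₂1 : (0:ℝ) < δ₂ - 1 := by linarith
  have h2r : (0:ℝ) < 2 * rbar := by linarith
  have hhalf : (0:ℝ) < 1/2 := by norm_num
  -- key: c₂ * (2 rbar)^δ₂ ≤ 2 rbar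
  have h2rle : 2 * rbar ≤ c₂ ^ (-(1/(δ₂-1))) := by linarith
  have hkey : c₂ * (2*rbar) ^ δ₂ ≤ 2 * rbar := by
    have h1 : (2*rbar) ^ (δ₂ - 1) ≤ (c₂ ^ (-(1/(δ₂-1)))) ^ (δ₂-1) :=
      Real.rpow_le_rpow h2r.le h2rle hδ₂1.le
    have h2 : (c₂ ^ (-(1/(δ₂-1)))) ^ (δ₂-1) = c₂⁻¹ := by
      rw [← Real.rpow_mul hc₂.le]
      rw [show -(1/(δ₂-1)) * (δ₂-1) = -1 by field_simp]
      exact Real.rpow_neg_one c₂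
    have h3 : (2*rbar) ^ δ₂ = (2*rbar) ^ (δ₂-1) * (2*rbar) := by
      have h := Real.rpow_add_one h2r.ne' (δ₂-1)
      rw [sub_add_cancel] at h
      exact h
    calc c₂ * (2*rbar) ^ δ₂ = c₂ * ((2*rbar)^(δ₂-1) * (2*rbar)) := by rw [h3]
      _ ≤ c₂ * (c₂⁻¹ * (2*rbar)) := by
          have := mul_le_mul_of_nonneg_right (h2 ▸ h1) h2r.le
          exact mul_le_mul_of_nonneg_left this hc₂.le
      _ = 2 * rbar := by field_simp
  -- a k ≤ 2 rbar (1/2)^(δ₂^k)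
  have hak : ∀ k, a k ≤ 2 * rbar * (1/2:ℝ) ^ (δ₂ ^ k) := by
    intro k
    induction k with
    | zero =>
      simp only [pow_zero, Real.rpow_one]
      linarith
    | succ k ih =>
      have hq : (0:ℝ) ≤ (1/2:ℝ) ^ (δ₂ ^ k) := (Real.rpow_pos_of_pos hhalf _).le
      have h1 : a (k+1) ≤ c₂ * (2*rbar * (1/2:ℝ)^(δ₂^k)) ^ δ₂ :=
        (hrec k).trans (mul_le_mul_of_nonneg_left
          (Real.rpow_le_rpow (hpos k) ih (by linarith : (0:ℝ) ≤ δ₂)) hc₂.le)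
      have h2 : (2*rbar * (1/2:ℝ)^(δ₂^k)) ^ δ₂
          = (2*rbar) ^ δ₂ * (1/2:ℝ) ^ (δ₂ ^ (k+1)) := by
        rw [Real.mul_rpow h2r.le hq, ← Real.rpow_mul hhalf.le, ← pow_succ]
      calc a (k+1) ≤ c₂ * ((2*rbar) ^ δ₂ * (1/2:ℝ) ^ (δ₂ ^ (k+1))) := by rw [← h2]; exact h1
        _ = (c₂ * (2*rbar) ^ δ₂) * (1/2:ℝ) ^ (δ₂ ^ (k+1)) := by ring
        _ ≤ 2 * rbar * (1/2:ℝ) ^ (δ₂ ^ (k+1)) := by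
            exact mul_le_mul_of_nonneg_right hkey (Real.rpow_pos_of_pos hhalf _).le
  -- pointwise bound on ‖d k‖
  set C : ℝ := c₁ * (2 * rbar) ^ δ₁ with hC
  have hCpos : 0 < C := mul_pos hc₁ (Real.rpow_pos_of_pos h2r _)
  set g : ℕ → ℝ := fun k => (1/2:ℝ) ^ (δ₁ * δ₂ ^ (k:ℝ)) with hg
  have hgnn : ∀ k, 0 ≤ g k := fun k => (Real.rpow_pos_of_pos hhalf _).le
  have hdk : ∀ k, ‖d k‖ ≤ C * g k := by
    intro k
    refine (hd k).trans ?_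
    have h1 : a k ^ δ₁ ≤ (2*rbar * (1/2:ℝ)^(δ₂^k)) ^ δ₁ :=
      Real.rpow_le_rpow (hpos k) (hak k) hδ₁0.le
    have h2 : (2*rbar * (1/2:ℝ)^(δ₂^k)) ^ δ₁ = (2*rbar) ^ δ₁ * g k := by
      rw [Real.mul_rpow h2r.le (Real.rpow_pos_of_pos hhalf _).le,
        ← Real.rpow_mul hhalf.le, hg]
      simp only [Real.rpow_natCast]
      ring_nf
    calc c₁ * a k ^ δ₁ ≤ c₁ * ((2*rbar) ^ δ₁ * g k) := by
          exact mul_le_mul_of_nonneg_left (h2 ▸ h1) hc₁.le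
      _ = C * g k := by rw [hC]; ring
  -- summability of g by geometric comparison
  have hgsum : Summable g := by
    set q : ℝ := (1/2:ℝ) ^ (δ₁ * (δ₂ - 1)) with hqdef
    have hq0 : 0 < q := Real.rpow_pos_of_pos hhalf _
    have hq1 : q < 1 :=
      Real.rpow_lt_one (by norm_num) (by norm_num) (mul_pos hδ₁0 hδ₂1)
    have hmaj : ∀ k, g k ≤ (1/2:ℝ) ^ δ₁ * q ^ k := by
      intro k
      have hb : 1 + (k:ℝ) * (δ₂ - 1) ≤ δ₂ ^ k := by
        have := one_add_mul_le_pow (by linarith : (-2:ℝ) ≤ δ₂ - 1) k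
        calc 1 + (k:ℝ) * (δ₂ - 1) ≤ (1 + (δ₂ - 1)) ^ k := this
          _ = δ₂ ^ k := by ring_nf
      have hexp : δ₁ + (k:ℝ) * (δ₁ * (δ₂ - 1)) ≤ δ₁ * δ₂ ^ (k:ℝ) := by
        rw [Real.rpow_natCast]
        nlinarith [hb]
      have h1 : g k ≤ (1/2:ℝ) ^ (δ₁ + (k:ℝ) * (δ₁ * (δ₂ - 1))) :=
        Real.rpow_le_rpow_of_exponent_ge hhalf (by norm_num) hexp
      have h2 : (1/2:ℝ) ^ (δ₁ + (k:ℝ) * (δ₁ * (δ₂ - 1)))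
          = (1/2:ℝ) ^ δ₁ * q ^ k := by
        rw [Real.rpow_add hhalf, hqdef, ← Real.rpow_natCast ((1/2:ℝ) ^ (δ₁ * (δ₂-1))) k,
          ← Real.rpow_mul hhalf.le]
        ring_nf
      exact h1.trans_eq h2
    exact Summable.of_nonneg_of_le hgnn hmaj
      (((summable_geometric_of_lt_one hq0.le hq1)).mul_left _)
  have hfsum : Summable (fun k => C * g k) := hgsum.mul_left C
  have hdsum : Summable (fun k : ℕ => ‖d k‖) :=
    Summable.of_nonneg_of_le (fun k => norm_nonneg _) hdk hfsum
  refine ⟨hdsum, ?_, ?_⟩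
  · calc (∑' k : ℕ, ‖d k‖) ≤ ∑' k : ℕ, C * g k := Summable.tsum_le_tsum hdk hdsum hfsum
      _ = C * ∑' k : ℕ, g k := tsum_mul_left
  · have hsd : Summable d := hdsum.of_norm
    have := hsd.hasSum.tendsto_sum_nat
    exact (Filter.Tendsto.const_add x₀ this).cauchySeq
end

section
/- Let (x_k) in ℝ^m converge to x̄, with ‖x_{k+1} − x_k‖ ≤ c₁ a_k where a_k ≥ 0 satisfy a_{k+1} ≤ (1/2) a_k for all k ≥ K and a_k ≤ c₂ a_{k−1}^{δ₂}, a_{k−1} ≤ ‖x_{k−1} − x̄‖. Then for all sufficiently large k, ‖x_k − x̄‖ ≤ 2 c₁ c₂ ‖x_{k−1} − x̄‖^{δ₂}. -/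
open Filter Topology

theorem le_pow_mul_of_forall_le_mul {u : ℕ → ℝ} {c : ℝ} (hc : 0 ≤ c) {n : ℕ}
    (h : ∀ k, n ≤ k → u (k + 1) ≤ c * u k) (p : ℕ) : u (n + p) ≤ c ^ p * u n :=
  le_geom (u := fun i => u (n + i)) hc p fun i _ => h (n + i) (Nat.le_add_right n i)

theorem dist_le_two_mul_of_dist_succ_le_of_halving {α : Type*} [PseudoMetricSpace α]
    {f : ℕ → α} {l : α} {a : ℕ → ℝ} {c : ℝ} {n : ℕ} (hc : 0 ≤ c)
    (hf : Tendsto f atTop (𝓝 l)) (hstep : ∀ k, n ≤ k → dist (f k) (f (k + 1)) ≤ c * a k)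
    (hhalf : ∀ k, n ≤ k → a (k + 1) ≤ 1 / 2 * a k) :
    dist (f n) l ≤ 2 * c * a n := by
  have hshift : Tendsto (fun p => f (n + p)) atTop (𝓝 l) :=
    (hf.comp (tendsto_add_atTop_nat n)).congr fun p => by rw [Function.comp_apply, add_comm]
  refine dist_le_of_le_geometric_two_of_tendsto₀ (f := fun p => f (n + p)) (fun p => ?_) hshift
  calc dist (f (n + p)) (f (n + p + 1))
      ≤ c * a (n + p) := hstep _ (Nat.le_add_right n p)
    _ ≤ c * ((1 / 2) ^ p * a n) :=
        mul_le_mul_of_nonneg_left (le_pow_mul_of_forall_le_mul (by norm_num) hhalf p) hc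
    _ = 2 * c * a n / 2 / 2 ^ p := by rw [one_div_pow]; field_simp

/-- Superlinear convergence of the iterates: if `x_k → x̄`,
`‖x_{k+1} − x_k‖ ≤ c₁ a_k`, `a_{k+1} ≤ (1/2) a_k` for `k ≥ K`,
`a_{k+1} ≤ c₂ a_k^{δ₂}` and `a_k ≤ ‖x_k − x̄‖`, then for all sufficiently
large `k`, `‖x_{k+1} − x̄‖ ≤ 2 c₁ c₂ ‖x_k − x̄‖^{δ₂}`. -/
theorem iterates_superlinear (m : ℕ) (c₁ c₂ δ₂ : ℝ) (K : ℕ)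
    (x : ℕ → EuclideanSpace ℝ (Fin m)) (xbar : EuclideanSpace ℝ (Fin m)) (a : ℕ → ℝ)
    (hc₁ : 0 < c₁) (hc₂ : 0 < c₂) (hδ₂ : 1 < δ₂)
    (hpos : ∀ k, 0 ≤ a k)
    (hconv : Tendsto x atTop (nhds xbar))
    (hstep : ∀ k, ‖x (k + 1) - x k‖ ≤ c₁ * a k)
    (hhalf : ∀ k, K ≤ k → a (k + 1) ≤ (1 / 2) * a k)
    (hrec : ∀ k, a (k + 1) ≤ c₂ * a k ^ δ₂)
    (hdist : ∀ k, a k ≤ ‖x k - xbar‖) :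
    ∃ N : ℕ, ∀ k, N ≤ k → ‖x (k + 1) - xbar‖ ≤ 2 * c₁ * c₂ * ‖x k - xbar‖ ^ δ₂ := by
  refine ⟨K, fun k hk => ?_⟩
  have htail : ‖x (k + 1) - xbar‖ ≤ 2 * c₁ * a (k + 1) := by
    rw [← dist_eq_norm]
    refine dist_le_two_mul_of_dist_succ_le_of_halving hc₁.le hconv (fun i _ => ?_)
      (fun i hi => hhalf i (by omega))
    rw [dist_comm, dist_eq_norm]
    exact hstep i
  have hpow : a k ^ δ₂ ≤ ‖x k - xbar‖ ^ δ₂ :=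
    Real.rpow_le_rpow (hpos k) (hdist k) (by linarith)
  calc ‖x (k + 1) - xbar‖ ≤ 2 * c₁ * a (k + 1) := htail
    _ ≤ 2 * c₁ * (c₂ * a k ^ δ₂) := by gcongr; exact hrec k
    _ ≤ 2 * c₁ * c₂ * ‖x k - xbar‖ ^ δ₂ := by rw [← mul_assoc]; gcongr
end

section
/- Let A be an m×n real matrix, μ > 0, H = A Aᵀ + μ I, g ∈ ℝ^m, d ∈ ℝ^m with residual r = H d + g satisfying ‖r‖ ≤ τ μ ‖d‖ for τ ∈ (0, 1/2). Define q(d) = (1/2)‖Aᵀ d + b‖² where g = A b. Then q(0) − q(d) ≥ (μ/2) ‖d‖². -/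
/-!
Expanding the square, `q 0 - q d = -(1/2)‖Aᵀd‖² - ⟪g, d⟫`, and `g = r - H d` turns this into
`(1/2)‖Aᵀd‖² + μ‖d‖² - ⟪r, d⟫`. Cauchy–Schwarz and the residual bound give `⟪r, d⟫ ≤ τμ‖d‖²`,
so the decrease is at least `(1 - τ)μ‖d‖² ≥ (μ/2)‖d‖²`.
-/

open ContinuousLinearMap

open scoped InnerProductSpace

section

variable {E F : Type*} [NormedAddCommGroup E] [InnerProductSpace ℝ E] [CompleteSpace E]
  [NormedAddCommGroup F] [InnerProductSpace ℝ F] [CompleteSpace F]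

noncomputable def regularizedGram (A : F →L[ℝ] E) (μ : ℝ) : E →L[ℝ] E :=
  A ∘L adjoint A + μ • ContinuousLinearMap.id ℝ E

theorem inner_regularizedGram_apply_self (A : F →L[ℝ] E) (μ : ℝ) (d : E) :
    ⟪regularizedGram A μ d, d⟫_ℝ = ‖adjoint A d‖ ^ 2 + μ * ‖d‖ ^ 2 := by
  rw [regularizedGram, add_apply, comp_apply, smul_apply, id_apply, inner_add_left,
    real_inner_smul_left, ← adjoint_inner_right, real_inner_self_eq_norm_sq,
    real_inner_self_eq_norm_sq]

theorem half_norm_sq_sub_half_norm_adjoint_apply_add_sq (A : F →L[ℝ] E) (b : F) (d : E) :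
    1 / 2 * ‖b‖ ^ 2 - 1 / 2 * ‖adjoint A d + b‖ ^ 2
      = -(1 / 2) * ‖adjoint A d‖ ^ 2 - ⟪A b, d⟫_ℝ := by
  rw [norm_add_sq_real, adjoint_inner_left, real_inner_comm]
  ring

theorem half_norm_sq_sub_half_norm_adjoint_apply_add_sq_eq (A : F →L[ℝ] E) (b : F) (μ : ℝ)
    (d : E) :
    1 / 2 * ‖b‖ ^ 2 - 1 / 2 * ‖adjoint A d + b‖ ^ 2
      = 1 / 2 * ‖adjoint A d‖ ^ 2 + μ * ‖d‖ ^ 2 - ⟪regularizedGram A μ d + A b, d⟫_ℝ := by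
  rw [half_norm_sq_sub_half_norm_adjoint_apply_add_sq, inner_add_left,
    inner_regularizedGram_apply_self]
  ring

theorem half_mul_norm_sq_le_half_norm_sq_sub_half_norm_adjoint_apply_add_sq (A : F →L[ℝ] E)
    (b : F) {μ τ : ℝ} (hμ : 0 ≤ μ) (hτ : τ ≤ 1 / 2) (d : E)
    (hres : ‖regularizedGram A μ d + A b‖ ≤ τ * μ * ‖d‖) :
    μ / 2 * ‖d‖ ^ 2 ≤ 1 / 2 * ‖b‖ ^ 2 - 1 / 2 * ‖adjoint A d + b‖ ^ 2 := by
  set r := regularizedGram A μ d + A b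
  have hrd : ⟪r, d⟫_ℝ ≤ τ * μ * ‖d‖ ^ 2 :=
    calc ⟪r, d⟫_ℝ ≤ ‖r‖ * ‖d‖ := real_inner_le_norm r d
      _ ≤ τ * μ * ‖d‖ * ‖d‖ := by gcongr
      _ = τ * μ * ‖d‖ ^ 2 := by ring
  rw [half_norm_sq_sub_half_norm_adjoint_apply_add_sq_eq A b μ]
  nlinarith [sq_nonneg ‖adjoint A d‖, mul_nonneg hμ (sq_nonneg ‖d‖)]

end

/-- Model decrease lower bound for the inexact LM step: with `H = A Aᵀ + μ I`,
`g = A b`, residual `r = H d + g` with `‖r‖ ≤ τ μ ‖d‖` for `τ ∈ (0,1/2)`, and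
`q(d) = (1/2)‖Aᵀ d + b‖²`, one has `q(0) − q(d) ≥ (μ/2)‖d‖²`. -/
theorem model_decrease_lower (m n : ℕ)
    (A : EuclideanSpace ℝ (Fin n) →L[ℝ] EuclideanSpace ℝ (Fin m))
    (b : EuclideanSpace ℝ (Fin n)) (μ τ : ℝ)
    (hμ : 0 < μ) (hτ : τ ∈ Set.Ioo (0 : ℝ) (1 / 2))
    (H : EuclideanSpace ℝ (Fin m) →L[ℝ] EuclideanSpace ℝ (Fin m))
    (hH : H = A.comp (ContinuousLinearMap.adjoint A) + μ • ContinuousLinearMap.id ℝ _)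
    (g d r : EuclideanSpace ℝ (Fin m))
    (hg : g = A b) (hr : r = H d + g) (hres : ‖r‖ ≤ τ * μ * ‖d‖)
    (q : EuclideanSpace ℝ (Fin m) → ℝ)
    (hq : ∀ u, q u = (1 / 2) * ‖(ContinuousLinearMap.adjoint A) u + b‖ ^ 2) :
    q 0 - q d ≥ (μ / 2) * ‖d‖ ^ 2 := by
  subst hH hg hr
  rw [hq, hq, map_zero, zero_add]
  exact half_mul_norm_sq_le_half_norm_sq_sub_half_norm_adjoint_apply_add_sq A b hμ.le hτ.2.le d
    hres
end

section
/- In the inexact LM setting: with A ∈ ℝ^{m×n}, ‖A‖ ≤ L₀, μ > 0, H = A Aᵀ + μ I, g = A b, d with residual r = H d + g, ‖r‖ ≤ τ μ ‖d‖ for τ ∈ (0,1/2), and q(d) = (1/2)‖Aᵀ d + b‖², one has q(0) − q(d) ≤ ((1/2) L₀² + (1+τ) μ) ‖d‖². -/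
/-!
Expanding the square gives `q 0 - q d = ½‖A* d‖² + μ‖d‖² - ⟪d, r⟫`, because
`⟪d, r⟫ = ⟪d, H d + A b⟫ = ‖A* d‖² + μ‖d‖² + ⟪A* d, b⟫`. The first term is at most
`½ L₀² ‖d‖²` since `‖A*‖ = ‖A‖`, and Cauchy–Schwarz bounds `-⟪d, r⟫` by `‖d‖ ‖r‖ ≤ τ μ ‖d‖²`.
-/

open scoped RealInnerProductSpace

namespace ContinuousLinearMap

variable {E F : Type*} [NormedAddCommGroup E] [InnerProductSpace ℝ E] [CompleteSpace E]
  [NormedAddCommGroup F] [InnerProductSpace ℝ F] [CompleteSpace F]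

theorem norm_adjoint_apply_le (A : E →L[ℝ] F) (d : F) : ‖adjoint A d‖ ≤ ‖A‖ * ‖d‖ := by
  simpa only [LinearIsometryEquiv.norm_map] using (adjoint A).le_opNorm d

theorem inner_comp_adjoint_add_smul_id_apply_add (A : E →L[ℝ] F) (μ : ℝ) (b : E) (d : F) :
    ⟪d, (A.comp (adjoint A) + μ • ContinuousLinearMap.id ℝ F) d + A b⟫ =
      ‖adjoint A d‖ ^ 2 + μ * ‖d‖ ^ 2 + ⟪adjoint A d, b⟫ := by
  simp only [add_apply, comp_apply, smul_apply, id_apply, inner_add_right, inner_smul_right,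
    ← adjoint_inner_left A, real_inner_self_eq_norm_sq]

theorem half_norm_sq_sub_half_norm_adjoint_add_sq (A : E →L[ℝ] F) (μ : ℝ) (b : E) (d : F) :
    1 / 2 * ‖b‖ ^ 2 - 1 / 2 * ‖adjoint A d + b‖ ^ 2 =
      1 / 2 * ‖adjoint A d‖ ^ 2 + μ * ‖d‖ ^ 2 -
        ⟪d, (A.comp (adjoint A) + μ • ContinuousLinearMap.id ℝ F) d + A b⟫ := by
  rw [inner_comp_adjoint_add_smul_id_apply_add, norm_add_sq_real]
  ring

theorem half_norm_sq_sub_half_norm_adjoint_add_sq_le (A : E →L[ℝ] F) {L μ c : ℝ} (b : E) (d : F)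
    (hA : ‖A‖ ≤ L)
    (hres : ‖(A.comp (adjoint A) + μ • ContinuousLinearMap.id ℝ F) d + A b‖ ≤ c * ‖d‖) :
    1 / 2 * ‖b‖ ^ 2 - 1 / 2 * ‖adjoint A d + b‖ ^ 2 ≤ (1 / 2 * L ^ 2 + μ + c) * ‖d‖ ^ 2 := by
  set r := (A.comp (adjoint A) + μ • ContinuousLinearMap.id ℝ F) d + A b
  have hAd : ‖adjoint A d‖ ≤ L * ‖d‖ :=
    (norm_adjoint_apply_le A d).trans (mul_le_mul_of_nonneg_right hA (norm_nonneg d))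
  have hAd_sq : ‖adjoint A d‖ ^ 2 ≤ L ^ 2 * ‖d‖ ^ 2 := by
    rw [← mul_pow]
    exact pow_le_pow_left₀ (norm_nonneg _) hAd 2
  have hinner : -⟪d, r⟫ ≤ c * ‖d‖ ^ 2 :=
    calc -⟪d, r⟫ = ⟪d, -r⟫ := (inner_neg_right d r).symm
      _ ≤ ‖d‖ * ‖-r‖ := real_inner_le_norm d (-r)
      _ ≤ ‖d‖ * (c * ‖d‖) := by
        rw [norm_neg]
        exact mul_le_mul_of_nonneg_left hres (norm_nonneg d)
      _ = c * ‖d‖ ^ 2 := by ring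
  rw [half_norm_sq_sub_half_norm_adjoint_add_sq A μ]
  linarith

end ContinuousLinearMap

theorem model_decrease_upper_general (m n : ℕ)
    (A : EuclideanSpace ℝ (Fin n) →L[ℝ] EuclideanSpace ℝ (Fin m))
    (b : EuclideanSpace ℝ (Fin n)) (μ τ : ℝ)
    (L₀ : ℝ) (hA : ‖A‖ ≤ L₀)
    (H : EuclideanSpace ℝ (Fin m) →L[ℝ] EuclideanSpace ℝ (Fin m))
    (hH : H = A.comp (ContinuousLinearMap.adjoint A) + μ • ContinuousLinearMap.id ℝ _)
    (g d r : EuclideanSpace ℝ (Fin m))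
    (hg : g = A b) (hr : r = H d + g) (hres : ‖r‖ ≤ τ * μ * ‖d‖)
    (q : EuclideanSpace ℝ (Fin m) → ℝ)
    (hq : ∀ u, q u = (1 / 2) * ‖(ContinuousLinearMap.adjoint A) u + b‖ ^ 2) :
    q 0 - q d ≤ ((1 / 2) * L₀ ^ 2 + (1 + τ) * μ) * ‖d‖ ^ 2 := by
  subst hH hg hr
  rw [hq, hq, map_zero, zero_add]
  calc _ ≤ (1 / 2 * L₀ ^ 2 + μ + τ * μ) * ‖d‖ ^ 2 :=
        A.half_norm_sq_sub_half_norm_adjoint_add_sq_le b d hA hres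
    _ = _ := by ring

/-- Model decrease upper bound for the inexact LM step: with `H = A Aᵀ + μ I`,
`g = A b`, residual `r = H d + g` with `‖r‖ ≤ τ μ ‖d‖` for `τ ∈ (0,1/2)`, and
`q(d) = (1/2)‖Aᵀ d + b‖²`, with `‖A‖ ≤ L₀`, one has `q(0) − q(d) ≤ ((1/2)L₀² + (1+τ)μ)‖d‖²`. -/
theorem model_decrease_upper (m n : ℕ)
    (A : EuclideanSpace ℝ (Fin n) →L[ℝ] EuclideanSpace ℝ (Fin m))
    (b : EuclideanSpace ℝ (Fin n)) (μ τ : ℝ)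
    (L₀ : ℝ) (hA : ‖A‖ ≤ L₀) (hμ : 0 < μ) (hτ : τ ∈ Set.Ioo (0 : ℝ) (1 / 2))
    (H : EuclideanSpace ℝ (Fin m) →L[ℝ] EuclideanSpace ℝ (Fin m))
    (hH : H = A.comp (ContinuousLinearMap.adjoint A) + μ • ContinuousLinearMap.id ℝ _)
    (g d r : EuclideanSpace ℝ (Fin m))
    (hg : g = A b) (hr : r = H d + g) (hres : ‖r‖ ≤ τ * μ * ‖d‖)
    (q : EuclideanSpace ℝ (Fin m) → ℝ)
    (hq : ∀ u, q u = (1 / 2) * ‖(ContinuousLinearMap.adjoint A) u + b‖ ^ 2) :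
    q 0 - q d ≤ ((1 / 2) * L₀ ^ 2 + (1 + τ) * μ) * ‖d‖ ^ 2 :=
  model_decrease_upper_general m n A b μ τ L₀ hA H hH g d r hg hr hres q hq
end

section
/- Let F : ℝ^m → ℝ^n be continuously differentiable with ∇F Lipschitz of modulus L on a set containing the segment from x to x + d, ‖∇F(x)‖ ≤ L₀, and ‖F(x)‖ ≤ B. If ‖d‖ ≤ K, then ‖F(x + d)‖ ≤ (L/2) K² + B + L₀ K, and the model error satisfies |q(d) − ψ(x + d)| ≤ ((L²/8) K² + (L/2)((L/2)K² + B + L₀ K)) ‖d‖², where q(d) = (1/2)‖∇F(x)ᵀ d + F(x)‖² and ψ(y) = (1/2)‖F(y)‖². -/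
set_option maxHeartbeats 800000


/-- Model error bound: if `‖F(x+d) − F(x) − A d‖ ≤ (L/2)‖d‖²` (Lipschitz
gradient), `‖A‖ ≤ L₀`, `‖F(x)‖ ≤ B`, and `‖d‖ ≤ K`, then
`‖F(x+d)‖ ≤ (L/2)K² + B + L₀ K` and
`|q(d) − ψ(x+d)| ≤ ((L²/8)K² + (L/2)((L/2)K² + B + L₀K))‖d‖²`,
where `q(d) = (1/2)‖A d + F(x)‖²` and `ψ(y) = (1/2)‖F(y)‖²`. -/
theorem model_error_bound (m n : ℕ)
    (F : EuclideanSpace ℝ (Fin m) → EuclideanSpace ℝ (Fin n))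
    (x d : EuclideanSpace ℝ (Fin m))
    (A : EuclideanSpace ℝ (Fin m) →L[ℝ] EuclideanSpace ℝ (Fin n))
    (L L₀ B K : ℝ) (hL : 0 < L) (hL₀ : 0 ≤ L₀) (hK : 0 ≤ K)
    (hTaylor : ‖F (x + d) - F x - A d‖ ≤ (L / 2) * ‖d‖ ^ 2)
    (hA : ‖A‖ ≤ L₀) (hB : ‖F x‖ ≤ B) (hd : ‖d‖ ≤ K) :
    ‖F (x + d)‖ ≤ (L / 2) * K ^ 2 + B + L₀ * K ∧
      |(1 / 2) * ‖A d + F x‖ ^ 2 - (1 / 2) * ‖F (x + d)‖ ^ 2| ≤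
        ((L ^ 2 / 8) * K ^ 2 + (L / 2) * ((L / 2) * K ^ 2 + B + L₀ * K)) * ‖d‖ ^ 2 := by
  set u := A d + F x with hu
  set v := F (x + d) with hv
  have hd0 : (0:ℝ) ≤ ‖d‖ := norm_nonneg d
  have hAd : ‖A d‖ ≤ L₀ * K := by
    calc ‖A d‖ ≤ ‖A‖ * ‖d‖ := A.le_opNorm d
    _ ≤ L₀ * K := by nlinarith [norm_nonneg (A d), A.opNorm_nonneg]
  have huB : ‖u‖ ≤ B + L₀ * K := by
    calc ‖u‖ ≤ ‖A d‖ + ‖F x‖ := norm_add_le _ _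
    _ ≤ B + L₀ * K := by linarith
  have hd2 : ‖d‖ ^ 2 ≤ K ^ 2 := by nlinarith
  have he : ‖u - v‖ ≤ (L / 2) * ‖d‖ ^ 2 := by
    have : u - v = -(F (x + d) - F x - A d) := by rw [hu, hv]; abel
    rw [this, norm_neg]; exact hTaylor
  have hvB : ‖v‖ ≤ (L / 2) * K ^ 2 + B + L₀ * K := by
    have hvv : v = u - (u - v) := by abel
    calc ‖v‖ = ‖u - (u - v)‖ := by rw [← hvv]
    _ ≤ ‖u‖ + ‖u - v‖ := norm_sub_le _ _
    _ ≤ (L / 2) * K ^ 2 + B + L₀ * K := by nlinarith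
  refine ⟨hvB, ?_⟩
  have hsub : |‖u‖ - ‖v‖| ≤ ‖u - v‖ := abs_norm_sub_norm_le u v
  have key : |(1:ℝ) / 2 * ‖u‖ ^ 2 - 1 / 2 * ‖v‖ ^ 2|
      ≤ 1 / 2 * ‖u - v‖ * (‖u‖ + ‖v‖) := by
    have h1 : (1:ℝ) / 2 * ‖u‖ ^ 2 - 1 / 2 * ‖v‖ ^ 2
        = 1 / 2 * (‖u‖ - ‖v‖) * (‖u‖ + ‖v‖) := by ring
    rw [h1, abs_mul, abs_mul]
    have h2 : |(1:ℝ)/2| = 1/2 := by norm_num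
    have h3 : |‖u‖ + ‖v‖| = ‖u‖ + ‖v‖ :=
      abs_of_nonneg (by positivity)
    rw [h2, h3]
    have := abs_nonneg (‖u‖ - ‖v‖)
    nlinarith [norm_nonneg u, norm_nonneg v]
  calc |(1:ℝ) / 2 * ‖u‖ ^ 2 - 1 / 2 * ‖v‖ ^ 2|
      ≤ 1 / 2 * ‖u - v‖ * (‖u‖ + ‖v‖) := key
    _ ≤ ((L ^ 2 / 8) * K ^ 2 + (L / 2) * ((L / 2) * K ^ 2 + B + L₀ * K)) * ‖d‖ ^ 2 := by
        have hB0 : 0 ≤ B + L₀ * K := le_trans (norm_nonneg u) huB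
        nlinarith [norm_nonneg (u - v), norm_nonneg u, norm_nonneg v,
          mul_le_mul he (add_le_add huB hvB) (by positivity) (by positivity : (0:ℝ) ≤ (L/2) * ‖d‖^2),
          mul_nonneg (mul_nonneg (sq_nonneg L) (sq_nonneg K)) (sq_nonneg ‖d‖)]
end
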